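/- arXiv:2210.17293 — 2 statements merged into one kernel-verified Lean document; each statement's English description precedes it below -/
import Mathlib

section
/- The Calabi operator output satisfies the first Bianchi-type symmetry C(h)_{[abc]d} = 0; hence C(h) has the full algebraic symmetries of a Riemann tensor. -/
noncomputable section

open scoped BigOperators

/-- Partial derivative of a scalar function in the `a`-th coordinate direction on `ℝⁿ`. -/
def pderiv {n : ℕ} (a : Fin n) (f : (Fin n → ℝ) → ℝ) (x : Fin n → ℝ) : ℝ :=
  fderiv ℝ f x (Pi.single a 1)

/-- Inverse metric `g^{ab}` (pointwise matrix inverse). -/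
def ginv {n : ℕ} (g : (Fin n → ℝ) → Fin n → Fin n → ℝ) (x : Fin n → ℝ) (a b : Fin n) : ℝ :=
  (Matrix.of (g x))⁻¹ a b

/-- A metric in coordinates: smooth, symmetric, pointwise nondegenerate. -/
def IsMetric {n : ℕ} (g : (Fin n → ℝ) → Fin n → Fin n → ℝ) : Prop :=
  ContDiff ℝ (⊤ : ℕ∞) g ∧ (∀ x a b, g x a b = g x b a) ∧ ∀ x, IsUnit (Matrix.of (g x)).det

/-- Christoffel symbols `Γ^c_{ab}` of the Levi-Civita connection. -/
def christoffel {n : ℕ} (g : (Fin n → ℝ) → Fin n → Fin n → ℝ) (x : Fin n → ℝ)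
    (c a b : Fin n) : ℝ :=
  (1/2) * ∑ e, ginv g x c e *
    (pderiv a (fun y => g y e b) x + pderiv b (fun y => g y e a) x
      - pderiv e (fun y => g y a b) x)

/-- Curvature `R_{ab}{}^c{}_d`, convention `(∇_a∇_b-∇_b∇_a)X^c = R_{ab}{}^c{}_d X^d`. -/
def riemann {n : ℕ} (g : (Fin n → ℝ) → Fin n → Fin n → ℝ) (x : Fin n → ℝ)
    (a b c d : Fin n) : ℝ :=
  pderiv a (fun y => christoffel g y c b d) x - pderiv b (fun y => christoffel g y c a d) x
  + ∑ e, (christoffel g x c a e * christoffel g x e b d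
        - christoffel g x c b e * christoffel g x e a d)

/-- Fully covariant Riemann tensor `R_{abcd} = g_{ce} R_{ab}{}^e{}_d`. -/
def riemannLow {n : ℕ} (g : (Fin n → ℝ) → Fin n → Fin n → ℝ) (x : Fin n → ℝ)
    (a b c d : Fin n) : ℝ :=
  ∑ e, g x c e * riemann g x a b e d

/-- Ricci tensor `R_{bd} = g^{ac} R_{abcd} = R_{ab}{}^a{}_d`. -/
def ricci {n : ℕ} (g : (Fin n → ℝ) → Fin n → Fin n → ℝ) (x : Fin n → ℝ) (b d : Fin n) : ℝ :=
  ∑ a, riemann g x a b a d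

/-- Covariant derivative `∇_a X_b` of a 1-form. -/
def cd1 {n : ℕ} (g : (Fin n → ℝ) → Fin n → Fin n → ℝ) (X : (Fin n → ℝ) → Fin n → ℝ)
    (x : Fin n → ℝ) (a b : Fin n) : ℝ :=
  pderiv a (fun y => X y b) x - ∑ e, christoffel g x e a b * X x e

/-- Covariant derivative `∇_a h_{bc}` of a covariant 2-tensor. -/
def cd2 {n : ℕ} (g : (Fin n → ℝ) → Fin n → Fin n → ℝ)
    (h : (Fin n → ℝ) → Fin n → Fin n → ℝ) (x : Fin n → ℝ) (a b c : Fin n) : ℝ :=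
  pderiv a (fun y => h y b c) x - ∑ e, christoffel g x e a b * h x e c
    - ∑ e, christoffel g x e a c * h x b e

/-- Covariant derivative `∇_a T_{bcd}` of a covariant 3-tensor. -/
def cd3 {n : ℕ} (g : (Fin n → ℝ) → Fin n → Fin n → ℝ)
    (T : (Fin n → ℝ) → Fin n → Fin n → Fin n → ℝ) (x : Fin n → ℝ) (a b c d : Fin n) : ℝ :=
  pderiv a (fun y => T y b c d) x - ∑ e, christoffel g x e a b * T x e c d
    - ∑ e, christoffel g x e a c * T x b e d - ∑ e, christoffel g x e a d * T x b c e

/-- Covariant derivative `∇_a T_{bcde}` of a covariant 4-tensor. -/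
def cd4 {n : ℕ} (g : (Fin n → ℝ) → Fin n → Fin n → ℝ)
    (T : (Fin n → ℝ) → Fin n → Fin n → Fin n → Fin n → ℝ) (x : Fin n → ℝ)
    (a b c d e : Fin n) : ℝ :=
  pderiv a (fun y => T y b c d e) x - ∑ f, christoffel g x f a b * T x f c d e
    - ∑ f, christoffel g x f a c * T x b f d e - ∑ f, christoffel g x f a d * T x b c f e
    - ∑ f, christoffel g x f a e * T x b c d f

/-- Second covariant derivative `∇_a ∇_c h_{bd}` of a covariant 2-tensor. -/
def cdd {n : ℕ} (g : (Fin n → ℝ) → Fin n → Fin n → ℝ)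
    (h : (Fin n → ℝ) → Fin n → Fin n → ℝ) (x : Fin n → ℝ) (a c b d : Fin n) : ℝ :=
  cd3 g (fun y => cd2 g h y) x a c b d

/-- The Calabi operator
`C(h)_{abcd} = ∇_{(a}∇_{c)}h_{bd} - ∇_{(b}∇_{c)}h_{ad} - ∇_{(a}∇_{d)}h_{bc}
 + ∇_{(b}∇_{d)}h_{ac} - R_{ab}{}^e{}_{[c}h_{d]e} - R_{cd}{}^e{}_{[a}h_{b]e}`. -/
def calabi {n : ℕ} (g : (Fin n → ℝ) → Fin n → Fin n → ℝ)
    (h : (Fin n → ℝ) → Fin n → Fin n → ℝ) (x : Fin n → ℝ) (a b c d : Fin n) : ℝ :=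
  (cdd g h x a c b d + cdd g h x c a b d) / 2
  - (cdd g h x b c a d + cdd g h x c b a d) / 2
  - (cdd g h x a d b c + cdd g h x d a b c) / 2
  + (cdd g h x b d a c + cdd g h x d b a c) / 2
  - (∑ e, (riemann g x a b e c * h x d e - riemann g x a b e d * h x c e)) / 2
  - (∑ e, (riemann g x c d e a * h x b e - riemann g x c d e b * h x a e)) / 2

/-- The Killing operator `K(X)_{ab} = ∇_{(a}X_{b)}`. -/
def killing {n : ℕ} (g : (Fin n → ℝ) → Fin n → Fin n → ℝ) (X : (Fin n → ℝ) → Fin n → ℝ)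
    (x : Fin n → ℝ) (a b : Fin n) : ℝ :=
  (cd1 g X x a b + cd1 g X x b a) / 2

/-- `μ_{ab} = ∇_{[a}X_{b]}`. -/
def muForm {n : ℕ} (g : (Fin n → ℝ) → Fin n → Fin n → ℝ) (X : (Fin n → ℝ) → Fin n → ℝ)
    (x : Fin n → ℝ) (a b : Fin n) : ℝ :=
  (cd1 g X x a b - cd1 g X x b a) / 2

/-- The operator `P(h)_{bd} = g^{ac} (C h)_{abcd}`. -/
def calP {n : ℕ} (g : (Fin n → ℝ) → Fin n → Fin n → ℝ)
    (h : (Fin n → ℝ) → Fin n → Fin n → ℝ) (x : Fin n → ℝ) (b d : Fin n) : ℝ :=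
  ∑ a, ∑ c, ginv g x a c * calabi g h x a b c d


section Aux

variable {n : ℕ} (g : (Fin n → ℝ) → Fin n → Fin n → ℝ)

lemma christoffel_symm' (hsym : ∀ x a b, g x a b = g x b a) (x : Fin n → ℝ) (c p q : Fin n) :
    christoffel g x c p q = christoffel g x c q p := by
  unfold christoffel
  congr 1
  refine Finset.sum_congr rfl fun e _ => ?_
  rw [show (fun y => g y p q) = fun y => g y q p from funext fun y => hsym y p q]
  ring

lemma riemann_antisymm' (x : Fin n → ℝ) (a b c d : Fin n) :
    riemann g x a b c d + riemann g x b a c d = 0 := by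
  have hs : (∑ e, (christoffel g x c a e * christoffel g x e b d
        - christoffel g x c b e * christoffel g x e a d))
      + (∑ e, (christoffel g x c b e * christoffel g x e a d
        - christoffel g x c a e * christoffel g x e b d)) = 0 := by
    rw [← Finset.sum_add_distrib]
    exact Finset.sum_eq_zero fun e _ => by ring
  unfold riemann
  linear_combination hs

lemma riemann_bianchi' (hsym : ∀ x a b, g x a b = g x b a) (x : Fin n → ℝ) (p q r c : Fin n) :
    riemann g x p q c r + riemann g x q r c p + riemann g x r p c q = 0 := by
  have hf : ∀ c p q : Fin n, (fun y => christoffel g y c p q) = fun y => christoffel g y c q p :=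
    fun c p q => funext fun y => christoffel_symm' g hsym y c p q
  have hs : (∑ e, (christoffel g x c p e * christoffel g x e q r
        - christoffel g x c q e * christoffel g x e p r))
      + (∑ e, (christoffel g x c q e * christoffel g x e r p
        - christoffel g x c r e * christoffel g x e q p))
      + (∑ e, (christoffel g x c r e * christoffel g x e p q
        - christoffel g x c p e * christoffel g x e r q)) = 0 := by
    rw [← Finset.sum_add_distrib, ← Finset.sum_add_distrib]
    refine Finset.sum_eq_zero fun e _ => ?_
    rw [christoffel_symm' g hsym x e q r, christoffel_symm' g hsym x e r p,
      christoffel_symm' g hsym x e p q]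
    ring
  unfold riemann
  rw [hf c q r, hf c r p, hf c p q]
  linear_combination hs

lemma cd2_symm' (h : (Fin n → ℝ) → Fin n → Fin n → ℝ) (hh : ∀ x a b, h x a b = h x b a)
    (x : Fin n → ℝ) (a b c : Fin n) : cd2 g h x a b c = cd2 g h x a c b := by
  have h0 : (fun y => h y b c) = fun y => h y c b := funext fun y => hh y b c
  have h1 : ∑ e, christoffel g x e a b * h x e c = ∑ e, christoffel g x e a b * h x c e :=
    Finset.sum_congr rfl fun e _ => by rw [hh x e c]
  have h2 : ∑ e, christoffel g x e a c * h x b e = ∑ e, christoffel g x e a c * h x e b :=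
    Finset.sum_congr rfl fun e _ => by rw [hh x b e]
  unfold cd2
  rw [h0, h1, h2]
  ring

lemma cd3_symm' (T : (Fin n → ℝ) → Fin n → Fin n → Fin n → ℝ)
    (hT : ∀ y p q r, T y p q r = T y p r q) (x : Fin n → ℝ) (a b c d : Fin n) :
    cd3 g T x a b c d = cd3 g T x a b d c := by
  have h0 : (fun y => T y b c d) = fun y => T y b d c := funext fun y => hT y b c d
  have h1 : ∑ e, christoffel g x e a b * T x e c d = ∑ e, christoffel g x e a b * T x e d c :=
    Finset.sum_congr rfl fun e _ => by rw [hT x e c d]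
  have h2 : ∑ e, christoffel g x e a c * T x b e d = ∑ e, christoffel g x e a c * T x b d e :=
    Finset.sum_congr rfl fun e _ => by rw [hT x b e d]
  have h3 : ∑ e, christoffel g x e a d * T x b c e = ∑ e, christoffel g x e a d * T x b e c :=
    Finset.sum_congr rfl fun e _ => by rw [hT x b c e]
  unfold cd3
  rw [h0, h1, h2, h3]
  ring

end Aux

/-- The Calabi operator output satisfies the first Bianchi-type symmetry
`C(h)_{[abc]d} = 0` (full skew-symmetrisation over `a,b,c`). -/
theorem calabi_first_bianchi {n : ℕ}
    (g : (Fin n → ℝ) → Fin n → Fin n → ℝ) (hg : IsMetric g)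
    (h : (Fin n → ℝ) → Fin n → Fin n → ℝ) (hhsymm : ∀ x a b, h x a b = h x b a)
    (hhsmooth : ContDiff ℝ (⊤ : ℕ∞) h) :
    ∀ (x : Fin n → ℝ) (a b c d : Fin n),
      (calabi g h x a b c d + calabi g h x b c a d + calabi g h x c a b d
        - calabi g h x b a c d - calabi g h x a c b d - calabi g h x c b a d) / 6 = 0 := by
  obtain ⟨-, hgs, -⟩ := hg
  intro x a b c d
  have Hc : ∀ p q r s : Fin n, cdd g h x p q r s = cdd g h x p q s r := by
    intro p q r s
    unfold cdd
    exact cd3_symm' g _ (fun y p q r => cd2_symm' g h hhsymm y p q r) x p q r s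
  have RA : ∀ (e p q r : Fin n), riemann g x p q e r + riemann g x q p e r = 0 :=
    fun e p q r => riemann_antisymm' g x p q e r
  have RB : ∀ (e p q r : Fin n),
      riemann g x p q e r + riemann g x q r e p + riemann g x r p e q = 0 :=
    fun e p q r => riemann_bianchi' g hgs x p q r e
  have point : ∀ e : Fin n,
      ((riemann g x a b e c * h x d e - riemann g x a b e d * h x c e)
        + (riemann g x c d e a * h x b e - riemann g x c d e b * h x a e))
      + ((riemann g x b c e a * h x d e - riemann g x b c e d * h x a e)
        + (riemann g x a d e b * h x c e - riemann g x a d e c * h x b e))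
      + ((riemann g x c a e b * h x d e - riemann g x c a e d * h x b e)
        + (riemann g x b d e c * h x a e - riemann g x b d e a * h x c e))
      - ((riemann g x b a e c * h x d e - riemann g x b a e d * h x c e)
        + (riemann g x c d e b * h x a e - riemann g x c d e a * h x b e))
      - ((riemann g x a c e b * h x d e - riemann g x a c e d * h x b e)
        + (riemann g x b d e a * h x c e - riemann g x b d e c * h x a e))
      - ((riemann g x c b e a * h x d e - riemann g x c b e d * h x a e)
        + (riemann g x a d e c * h x b e - riemann g x a d e b * h x c e)) = 0 := by
    intro e
    linear_combination (- h x d e) * RA e a b c + (h x c e) * RA e a b d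
      + (- h x d e) * RA e a c b + (- h x b e) * RA e a c d
      + (2 * h x c e) * RA e a d b + (-2 * h x b e) * RA e a d c
      + (- h x d e) * RA e b c a + (h x a e) * RA e b c d
      + (2 * h x a e) * RA e b d c
      + (2 * h x d e) * RB e a b c + (-2 * h x c e) * RB e a b d
      + (2 * h x b e) * RB e a c d + (-2 * h x a e) * RB e b c d
  have curv0 : ∑ e : Fin n,
      (((riemann g x a b e c * h x d e - riemann g x a b e d * h x c e)
        + (riemann g x c d e a * h x b e - riemann g x c d e b * h x a e))
      + ((riemann g x b c e a * h x d e - riemann g x b c e d * h x a e)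
        + (riemann g x a d e b * h x c e - riemann g x a d e c * h x b e))
      + ((riemann g x c a e b * h x d e - riemann g x c a e d * h x b e)
        + (riemann g x b d e c * h x a e - riemann g x b d e a * h x c e))
      - ((riemann g x b a e c * h x d e - riemann g x b a e d * h x c e)
        + (riemann g x c d e b * h x a e - riemann g x c d e a * h x b e))
      - ((riemann g x a c e b * h x d e - riemann g x a c e d * h x b e)
        + (riemann g x b d e a * h x c e - riemann g x b d e c * h x a e))
      - ((riemann g x c b e a * h x d e - riemann g x c b e d * h x a e)
        + (riemann g x a d e c * h x b e - riemann g x a d e b * h x c e))) = 0 :=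
    Finset.sum_eq_zero fun e _ => point e
  unfold calabi
  rw [Hc a d c b, Hc d a c b, Hc b d c a, Hc d b c a, Hc c d b a, Hc d c b a]
  simp only [Finset.sum_add_distrib, Finset.sum_sub_distrib] at curv0 ⊢
  linear_combination (-1/12 : ℝ) * curv0
end
end

section
/- Pointwise algebraic lemma: if a tensor R_{abcd} with Riemann symmetries satisfies 2R_{ab}{}^e{}_{[c}μ_{d]e} + 2R_{cd}{}^e{}_{[a}μ_{b]e} = 0 for every skew-symmetric μ_{ab}, and dim V ≥ 3, then R_{abcd} = k(g_{ac}g_{bd} - g_{ad}g_{bc}) for some scalar k. -/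
open scoped BigOperators
open Matrix

section CalabiAux
variable {n : ℕ} {g Ginv : Fin n → Fin n → ℝ} {R : Fin n → Fin n → Fin n → Fin n → ℝ}

private lemma calabi_hg2 (hginv : ∀ a b, (∑ e, Ginv a e * g e b) = if a = b then (1 : ℝ) else 0) :
    ∀ a b, (∑ e, g a e * Ginv e b) = if a = b then (1:ℝ) else 0 := by
  have hGiG : (Matrix.of Ginv) * (Matrix.of g) = (1 : Matrix (Fin n) (Fin n) ℝ) := by
    ext a b
    simpa [Matrix.mul_apply, Matrix.one_apply] using hginv a b
  have hGGi : (Matrix.of g) * (Matrix.of Ginv) = 1 := mul_eq_one_comm.mp hGiG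
  intro a b
  have h := congrArg (fun M => M a b) hGGi
  simpa [Matrix.mul_apply, Matrix.one_apply] using h

private lemma calabi_hGis (hgsymm : ∀ a b, g a b = g b a)
    (hginv : ∀ a b, (∑ e, Ginv a e * g e b) = if a = b then (1 : ℝ) else 0) :
    ∀ a b, Ginv a b = Ginv b a := by
  have hGiG : (Matrix.of Ginv) * (Matrix.of g) = (1 : Matrix (Fin n) (Fin n) ℝ) := by
    ext a b
    simpa [Matrix.mul_apply, Matrix.one_apply] using hginv a b
  have hGGi : (Matrix.of g) * (Matrix.of Ginv) = 1 := mul_eq_one_comm.mp hGiG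
  have hGsymm : (Matrix.of g)ᵀ = Matrix.of g := by
    ext a b; exact hgsymm b a
  have h1 : (Matrix.of Ginv)ᵀ * Matrix.of g = 1 := by
    calc (Matrix.of Ginv)ᵀ * Matrix.of g = (Matrix.of Ginv)ᵀ * (Matrix.of g)ᵀ := by rw [hGsymm]
      _ = ((Matrix.of g) * (Matrix.of Ginv))ᵀ := by rw [Matrix.transpose_mul]
      _ = 1 := by rw [hGGi, Matrix.transpose_one]
  have h2 : (Matrix.of Ginv)ᵀ = Matrix.of Ginv := by
    calc (Matrix.of Ginv)ᵀ = (Matrix.of Ginv)ᵀ * ((Matrix.of g) * (Matrix.of Ginv)) := by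
          rw [hGGi, mul_one]
      _ = ((Matrix.of Ginv)ᵀ * (Matrix.of g)) * (Matrix.of Ginv) := by rw [mul_assoc]
      _ = Matrix.of Ginv := by rw [h1, one_mul]
  intro a b
  have := congrArg (fun M => M a b) h2
  simpa [Matrix.transpose_apply] using this.symm

private lemma calabi_delsum (v : Fin n → ℝ) (c : Fin n) :
    ∑ x, v x * (if x = c then (1:ℝ) else 0) = v c := by simp

private lemma calabi_pick (hginv : ∀ a b, (∑ e, Ginv a e * g e b) = if a = b then (1 : ℝ) else 0)
    (hGis : ∀ a b, Ginv a b = Ginv b a) (v : Fin n → ℝ) (c : Fin n) :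
    (∑ p, (∑ q, Ginv p q * v q) * g p c) = v c := by
  calc (∑ p, (∑ q, Ginv p q * v q) * g p c)
      = ∑ p, ∑ q, v q * (Ginv q p * g p c) := by
        refine Finset.sum_congr rfl fun p _ => ?_
        rw [Finset.sum_mul]
        refine Finset.sum_congr rfl fun q _ => ?_
        rw [hGis p q]; ring
    _ = ∑ q, ∑ p, v q * (Ginv q p * g p c) := Finset.sum_comm
    _ = ∑ q, v q * (if q = c then 1 else 0) := by
        refine Finset.sum_congr rfl fun q _ => ?_
        rw [← Finset.mul_sum, hginv q c]
    _ = v c := calabi_delsum v c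

private lemma calabi_HA1 (hgsymm : ∀ a b, g a b = g b a)
    (hginv : ∀ a b, (∑ e, Ginv a e * g e b) = if a = b then (1 : ℝ) else 0)
    (hGis : ∀ a b, Ginv a b = Ginv b a) (v : Fin n → ℝ) (d : Fin n) :
    (∑ p, ∑ q, Ginv p q * (g d p * v q)) = v d := by
  calc (∑ p, ∑ q, Ginv p q * (g d p * v q))
      = ∑ q, ∑ p, Ginv p q * (g d p * v q) := Finset.sum_comm
    _ = ∑ q, v q * (if q = d then 1 else 0) := by
        refine Finset.sum_congr rfl fun q _ => ?_
        rw [← hginv q d, Finset.mul_sum]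
        refine Finset.sum_congr rfl fun p _ => ?_
        rw [hGis p q, hgsymm d p]; ring
    _ = v d := calabi_delsum v d

private lemma calabi_HA2 (hgsymm : ∀ a b, g a b = g b a)
    (hginv : ∀ a b, (∑ e, Ginv a e * g e b) = if a = b then (1 : ℝ) else 0)
    (hGis : ∀ a b, Ginv a b = Ginv b a) (v : Fin n → ℝ) (d : Fin n) :
    (∑ p, ∑ q, Ginv p q * (g p d * v q)) = v d := by
  rw [← calabi_HA1 hgsymm hginv hGis v d]
  exact Finset.sum_congr rfl fun p _ => Finset.sum_congr rfl fun q _ => by rw [hgsymm p d]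

private lemma calabi_HB1 (hginv : ∀ a b, (∑ e, Ginv a e * g e b) = if a = b then (1 : ℝ) else 0)
    (v : Fin n → ℝ) (f : Fin n) :
    (∑ p, ∑ q, Ginv p q * (g q f * v p)) = v f := by
  calc (∑ p, ∑ q, Ginv p q * (g q f * v p))
      = ∑ p, v p * (if p = f then 1 else 0) := by
        refine Finset.sum_congr rfl fun p _ => ?_
        rw [← hginv p f, Finset.mul_sum]
        refine Finset.sum_congr rfl fun q _ => ?_
        ring
    _ = v f := calabi_delsum v f

private lemma calabi_HB2 (hgsymm : ∀ a b, g a b = g b a)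
    (hginv : ∀ a b, (∑ e, Ginv a e * g e b) = if a = b then (1 : ℝ) else 0)
    (v : Fin n → ℝ) (f : Fin n) :
    (∑ p, ∑ q, Ginv p q * (g f q * v p)) = v f := by
  rw [← calabi_HB1 hginv v f]
  exact Finset.sum_congr rfl fun p _ => Finset.sum_congr rfl fun q _ => by rw [hgsymm f q]

private lemma calabi_Htr1 (hginv : ∀ a b, (∑ e, Ginv a e * g e b) = if a = b then (1 : ℝ) else 0)
    (C : ℝ) : (∑ p, ∑ q, Ginv p q * (g q p * C)) = (n : ℝ) * C := by
  calc (∑ p, ∑ q, Ginv p q * (g q p * C))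
      = ∑ p, (if p = p then (1:ℝ) else 0) * C := by
        refine Finset.sum_congr rfl fun p _ => ?_
        rw [← hginv p p, Finset.sum_mul]
        refine Finset.sum_congr rfl fun q _ => ?_
        ring
    _ = (n : ℝ) * C := by simp [Finset.sum_const, mul_comm]

private lemma calabi_Htr2 (hgsymm : ∀ a b, g a b = g b a)
    (hginv : ∀ a b, (∑ e, Ginv a e * g e b) = if a = b then (1 : ℝ) else 0)
    (C : ℝ) : (∑ p, ∑ q, Ginv p q * (g p q * C)) = (n : ℝ) * C := by
  rw [← calabi_Htr1 hginv C]
  exact Finset.sum_congr rfl fun p _ => Finset.sum_congr rfl fun q _ => by rw [hgsymm p q]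

private lemma calabi_Hconst (c0 : ℝ) (X : Fin n → Fin n → ℝ) :
    (∑ p, ∑ q, Ginv p q * (c0 * X p q)) = c0 * ∑ p, ∑ q, Ginv p q * X p q := by
  rw [Finset.mul_sum]
  refine Finset.sum_congr rfl fun p _ => ?_
  rw [Finset.mul_sum]
  exact Finset.sum_congr rfl fun q _ => by ring

private lemma calabi_Hskew (hGis : ∀ a b, Ginv a b = Ginv b a)
    (X : Fin n → Fin n → ℝ) (hX : ∀ p q, X p q = - X q p) :
    (∑ p, ∑ q, Ginv p q * X p q) = 0 := by
  have h : (∑ p, ∑ q, Ginv p q * X p q) = - ∑ p, ∑ q, Ginv p q * X p q := by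
    calc (∑ p, ∑ q, Ginv p q * X p q)
        = ∑ q, ∑ p, Ginv p q * X p q := Finset.sum_comm
      _ = ∑ p, ∑ q, Ginv q p * X q p := rfl
      _ = ∑ p, ∑ q, -(Ginv p q * X p q) := by
          refine Finset.sum_congr rfl fun p _ => Finset.sum_congr rfl fun q _ => ?_
          rw [hGis q p, hX q p]; ring
      _ = - ∑ p, ∑ q, Ginv p q * X p q := by simp
  linarith

private lemma calabi_expand (hginv : ∀ a b, (∑ e, Ginv a e * g e b) = if a = b then (1 : ℝ) else 0)
    (hGis : ∀ a b, Ginv a b = Ginv b a) (v : Fin n → ℝ) (p e f : Fin n) :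
    (∑ x, (∑ y, Ginv x y * v y) * (g p e * g x f - g p f * g x e))
    = g p e * v f - g p f * v e := by
  calc (∑ x, (∑ y, Ginv x y * v y) * (g p e * g x f - g p f * g x e))
      = g p e * (∑ x, (∑ y, Ginv x y * v y) * g x f)
        - g p f * (∑ x, (∑ y, Ginv x y * v y) * g x e) := by
        rw [Finset.mul_sum, Finset.mul_sum, ← Finset.sum_sub_distrib]
        refine Finset.sum_congr rfl fun x _ => ?_
        ring
    _ = g p e * v f - g p f * v e := by
        rw [calabi_pick hginv hGis v f, calabi_pick hginv hGis v e]

private lemma calabi_star (hginv : ∀ a b, (∑ e, Ginv a e * g e b) = if a = b then (1 : ℝ) else 0)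
    (hGis : ∀ a b, Ginv a b = Ginv b a)
    (hvan : ∀ μ : Fin n → Fin n → ℝ, (∀ a b, μ a b = - μ b a) →
      ∀ a b c d : Fin n,
        (∑ e, ((∑ f, Ginv e f * R a b f c) * μ d e
              - (∑ f, Ginv e f * R a b f d) * μ c e))
        + (∑ e, ((∑ f, Ginv e f * R c d f a) * μ b e
              - (∑ f, Ginv e f * R c d f b) * μ a e)) = 0) :
    ∀ a b c d e f : Fin n,
      (g d e * R a b f c - g d f * R a b e c) - (g c e * R a b f d - g c f * R a b e d)
      + ((g b e * R c d f a - g b f * R c d e a)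
         - (g a e * R c d f b - g a f * R c d e b)) = 0 := by
  intro a b c d e f
  have hμ : ∀ x y : Fin n, (fun x y => g x e * g y f - g x f * g y e) x y
      = - (fun x y => g x e * g y f - g x f * g y e) y x := by
    intro x y; simp only []; ring
  have h := hvan (fun x y => g x e * g y f - g x f * g y e) hμ a b c d
  rw [Finset.sum_sub_distrib, Finset.sum_sub_distrib] at h
  rw [calabi_expand hginv hGis (fun y => R a b y c) d e f,
      calabi_expand hginv hGis (fun y => R a b y d) c e f,
      calabi_expand hginv hGis (fun y => R c d y a) b e f,
      calabi_expand hginv hGis (fun y => R c d y b) a e f] at h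
  exact h

private lemma calabi_pairsymm (hR1 : ∀ a b c d, R a b c d = - R b a c d)
    (hR2 : ∀ a b c d, R a b c d = - R a b d c)
    (hR3 : ∀ a b c d, R a b c d + R b c a d + R c a b d = 0) :
    ∀ a b c d, R a b c d = R c d a b := by
  intro a b c d
  have h1 := hR3 a b c d
  have h2 := hR3 b c d a
  have h3 := hR3 c d a b
  have h4 := hR3 d a b c
  have e1 := hR2 b c a d
  have e2 := hR2 c d a b
  have e3 := hR1 d b c a
  have e4 := hR2 b d c a
  have e5 := hR2 d a b c
  have e6 := hR1 a c d b
  have e7 := hR2 c a d b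
  have e8 := hR2 a b c d
  have e9 := hR1 c d b a
  have e10 := hR1 d a c b
  have e11 := hR1 b c a d
  have e12 := hR1 a b d c
  linarith

private lemma calabi_hB (hgsymm : ∀ a b, g a b = g b a)
    (hginv : ∀ a b, (∑ e, Ginv a e * g e b) = if a = b then (1 : ℝ) else 0)
    (hGis : ∀ a b, Ginv a b = Ginv b a)
    (hR2 : ∀ a b c d, R a b c d = - R a b d c)
    (hstar : ∀ a b c d e f : Fin n,
      (g d e * R a b f c - g d f * R a b e c) - (g c e * R a b f d - g c f * R a b e d)
      + ((g b e * R c d f a - g b f * R c d e a)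
         - (g a e * R c d f b - g a f * R c d e b)) = 0) :
    ∀ b c d f : Fin n,
      R d b f c - R c b f d + (2 - (n:ℝ)) * R c d f b
      = g d f * (∑ p, ∑ q, Ginv p q * R q b p c)
        - g c f * (∑ p, ∑ q, Ginv p q * R q b p d) := by
  intro b c d f
  have h0 : (∑ p, ∑ q, Ginv p q *
      ((g d p * R q b f c - g d f * R q b p c) - (g c p * R q b f d - g c f * R q b p d)
      + ((g b p * R c d f q - g b f * R c d p q)
         - (g q p * R c d f b - g q f * R c d p b)))) = 0 :=
    Finset.sum_eq_zero fun p _ => Finset.sum_eq_zero fun q _ => by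
      rw [hstar q b c d p f, mul_zero]
  simp only [mul_sub, mul_add, Finset.sum_sub_distrib, Finset.sum_add_distrib] at h0
  rw [calabi_HA1 hgsymm hginv hGis (fun q => R q b f c) d,
      calabi_Hconst (g d f) (fun p q => R q b p c),
      calabi_HA1 hgsymm hginv hGis (fun q => R q b f d) c,
      calabi_Hconst (g c f) (fun p q => R q b p d),
      calabi_HA1 hgsymm hginv hGis (fun q => R c d f q) b,
      calabi_Hconst (g b f) (fun p q => R c d p q),
      calabi_Hskew hGis (fun p q => R c d p q) (fun p q => hR2 c d p q),
      calabi_Htr1 hginv (R c d f b),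
      calabi_HB1 hginv (fun p => R c d p b) f] at h0
  linarith

private lemma calabi_ric (hgsymm : ∀ a b, g a b = g b a)
    (hginv : ∀ a b, (∑ e, Ginv a e * g e b) = if a = b then (1 : ℝ) else 0)
    (hGis : ∀ a b, Ginv a b = Ginv b a)
    (Ric : Fin n → Fin n → ℝ)
    (hD : ∀ f b c d : Fin n,
      g d f * Ric b c - g c f * Ric b d + (g d b * Ric f c - g c b * Ric f d) = 0) :
    ∀ b d : Fin n, (n:ℝ) * Ric b d = (∑ p, ∑ q, Ginv p q * Ric q p) * g b d := by
  intro b d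
  have h0 : (∑ p, ∑ q, Ginv p q *
      (g d q * Ric b p - g p q * Ric b d + (g d b * Ric q p - g p b * Ric q d))) = 0 :=
    Finset.sum_eq_zero fun p _ => Finset.sum_eq_zero fun q _ => by
      rw [hD q b p d, mul_zero]
  simp only [mul_sub, mul_add, Finset.sum_sub_distrib, Finset.sum_add_distrib] at h0
  rw [calabi_HB2 hgsymm hginv (fun p => Ric b p) d,
      calabi_Htr2 hgsymm hginv (Ric b d),
      calabi_Hconst (g d b) (fun p q => Ric q p),
      calabi_HA2 hgsymm hginv hGis (fun q => Ric q d) b] at h0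
  have hgbd := hgsymm b d
  linear_combination (-1 : ℝ) * h0 - (∑ p, ∑ q, Ginv p q * Ric q p) * hgbd

end CalabiAux


/-- Pointwise algebraic lemma: if a tensor `R_{abcd}` with Riemann symmetries on
a vector space of dimension `n ≥ 3` with nondegenerate symmetric bilinear form
`g` (inverse `Ginv`, indices raised with `g`) satisfies
`2R_{ab}{}^e{}_{[c}μ_{d]e} + 2R_{cd}{}^e{}_{[a}μ_{b]e} = 0` for every
skew-symmetric `μ_{ab}`, then `R_{abcd} = k(g_{ac}g_{bd} - g_{ad}g_{bc})` for
some scalar `k`. -/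
theorem curvature_action_vanishes_implies_constant_curvature {n : ℕ} (hn : 3 ≤ n)
    (g Ginv : Fin n → Fin n → ℝ)
    (hgsymm : ∀ a b, g a b = g b a)
    (hginv : ∀ a b, (∑ e, Ginv a e * g e b) = if a = b then (1 : ℝ) else 0)
    (R : Fin n → Fin n → Fin n → Fin n → ℝ)
    (hR1 : ∀ a b c d, R a b c d = - R b a c d)
    (hR2 : ∀ a b c d, R a b c d = - R a b d c)
    (hR3 : ∀ a b c d, R a b c d + R b c a d + R c a b d = 0)
    (hvan : ∀ μ : Fin n → Fin n → ℝ, (∀ a b, μ a b = - μ b a) →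
      ∀ a b c d : Fin n,
        (∑ e, ((∑ f, Ginv e f * R a b f c) * μ d e
              - (∑ f, Ginv e f * R a b f d) * μ c e))
        + (∑ e, ((∑ f, Ginv e f * R c d f a) * μ b e
              - (∑ f, Ginv e f * R c d f b) * μ a e)) = 0) :
    ∃ k : ℝ, ∀ a b c d : Fin n,
      R a b c d = k * (g a c * g b d - g a d * g b c) := by
  have hGis := calabi_hGis hgsymm hginv
  have hR4 := calabi_pairsymm hR1 hR2 hR3
  have hstar := calabi_star hginv hGis hvan
  have hB := calabi_hB hgsymm hginv hGis hR2 hstar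
  -- hC : (1-n) R f b c d = g d f * Ric b c - g c f * Ric b d
  have hC : ∀ f b c d : Fin n, (1 - (n:ℝ)) * R f b c d
      = g d f * (∑ p, ∑ q, Ginv p q * R q b p c)
        - g c f * (∑ p, ∑ q, Ginv p q * R q b p d) := by
    intro f b c d
    have h1 := hB b c d f
    have p1 := hR4 d b f c
    have p2 := hR4 c b f d
    have p3 := hR4 c d f b
    have q1 := hR3 c d f b
    have q2 := hR1 f d c b
    linear_combination h1 - p1 + p2 + ((n:ℝ) - 1) * p3 - q1 + q2
  -- hD : antisymmetry of the Ricci combination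
  have hD : ∀ f b c d : Fin n,
      g d f * (∑ p, ∑ q, Ginv p q * R q b p c) - g c f * (∑ p, ∑ q, Ginv p q * R q b p d)
      + (g d b * (∑ p, ∑ q, Ginv p q * R q f p c)
         - g c b * (∑ p, ∑ q, Ginv p q * R q f p d)) = 0 := by
    intro f b c d
    linear_combination (-1 : ℝ) * hC f b c d - hC b f c d + (1 - (n:ℝ)) * hR1 f b c d
  have hRicEq := calabi_ric hgsymm hginv hGis
      (fun b c => ∑ p, ∑ q, Ginv p q * R q b p c) hD
  set Sc : ℝ := ∑ p, ∑ q, Ginv p q * (∑ p', ∑ q', Ginv p' q' * R q' q p' p) with hSc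
  have hn3 : (3:ℝ) ≤ (n:ℝ) := by exact_mod_cast hn
  have hne1 : (n:ℝ) ≠ 0 := by linarith
  have hne2 : (n:ℝ) - 1 ≠ 0 := by linarith
  refine ⟨Sc / ((n:ℝ) * ((n:ℝ) - 1)), ?_⟩
  intro a b c d
  have h1 := hC a b c d
  have h2 := hRicEq b c
  have h3 := hRicEq b d
  rw [div_mul_eq_mul_div, eq_div_iff (mul_ne_zero hne1 hne2)]
  linear_combination (-(n:ℝ)) * h1 + (- g d a) * h2 + (g c a) * h3
    + Sc * g b d * (hgsymm c a) - Sc * g b c * (hgsymm d a)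
end
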